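/- Let d >= 1, let S subset Z^d, let 0 < sigma < 1 and N >= 1, and write Lambda = B_N^2 \ B_{sigma N}^2 for the Euclidean annulus in Z^d. Suppose that: (i) 0 is connected to the inner boundary of B_N^2 by a nearest-neighbor path in S; (ii) 0 is not connected to infinity in S (i.e. the connected component of 0 in S is finite); and (iii) some point of B_{sigma N}^2 is connected to infinity in S. Then the two-arms event occurs in Lambda: there exist two crossings of Lambda contained in S which are not connected to each other inside S ∩ Lambda. -/

import Mathlib

open scoped BigOperators

/-- Nearest-neighbor adjacency on `ℤ^d`. -/
def latAdj {d : ℕ} (x y : Fin d → ℤ) : Prop := (∑ i : Fin d, |x i - y i|) = 1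

/-- `*`-adjacency on `ℤ^d` (`ℓ^∞`-distance one). -/
def latAdjStar {d : ℕ} (x y : Fin d → ℤ) : Prop := x ≠ y ∧ ∀ i : Fin d, |x i - y i| ≤ 1

/-- A nearest-neighbor path of length `k` staying in `S`. -/
def IsPathIn {d : ℕ} (S : Set (Fin d → ℤ)) (γ : ℕ → Fin d → ℤ) (k : ℕ) : Prop :=
  (∀ i ≤ k, γ i ∈ S) ∧ ∀ i < k, latAdj (γ i) (γ (i + 1))

/-- `x` and `y` are connected by a nearest-neighbor path inside `S`. -/
def ConnIn {d : ℕ} (S : Set (Fin d → ℤ)) (x y : Fin d → ℤ) : Prop :=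
  ∃ (γ : ℕ → Fin d → ℤ) (k : ℕ), IsPathIn S γ k ∧ γ 0 = x ∧ γ k = y

/-- A set is connected if any two of its points are joined by a path within it. -/
def ConnectedSet {d : ℕ} (S : Set (Fin d → ℤ)) : Prop :=
  ∀ x ∈ S, ∀ y ∈ S, ConnIn S x y

def IsStarPathIn {d : ℕ} (S : Set (Fin d → ℤ)) (γ : ℕ → Fin d → ℤ) (k : ℕ) : Prop :=
  (∀ i ≤ k, γ i ∈ S) ∧ ∀ i < k, latAdjStar (γ i) (γ (i + 1))

def StarConnIn {d : ℕ} (S : Set (Fin d → ℤ)) (x y : Fin d → ℤ) : Prop :=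
  ∃ (γ : ℕ → Fin d → ℤ) (k : ℕ), IsStarPathIn S γ k ∧ γ 0 = x ∧ γ k = y

def StarConnectedSet {d : ℕ} (S : Set (Fin d → ℤ)) : Prop :=
  ∀ x ∈ S, ∀ y ∈ S, StarConnIn S x y

/-- The connected component of `x` within `S`. -/
def connComp {d : ℕ} (S : Set (Fin d → ℤ)) (x : Fin d → ℤ) : Set (Fin d → ℤ) :=
  {y | ConnIn S x y}

def starConnComp {d : ℕ} (S : Set (Fin d → ℤ)) (x : Fin d → ℤ) : Set (Fin d → ℤ) :=
  {y | StarConnIn S x y}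

/-- Inner vertex boundary. -/
def innerBd {d : ℕ} (S : Set (Fin d → ℤ)) : Set (Fin d → ℤ) :=
  {x | x ∈ S ∧ ∃ y, y ∉ S ∧ latAdj x y}

/-- Outer vertex boundary. -/
def outerBd {d : ℕ} (S : Set (Fin d → ℤ)) : Set (Fin d → ℤ) :=
  {x | x ∉ S ∧ ∃ y ∈ S, latAdj x y}

/-- Closure: a set together with its outer boundary. -/
def clo {d : ℕ} (S : Set (Fin d → ℤ)) : Set (Fin d → ℤ) := S ∪ outerBd S

/-- `fill U`: union of `U` with all finite connected components of its complement. -/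
def fill {d : ℕ} (U : Set (Fin d → ℤ)) : Set (Fin d → ℤ) :=
  U ∪ {x | x ∉ U ∧ (connComp Uᶜ x).Finite}

/-- `Surr U A`: `U` is surrounded by `A`, i.e. every infinite connected set meeting `U`
meets `A`. -/
def Surr {d : ℕ} (U A : Set (Fin d → ℤ)) : Prop :=
  ∀ S : Set (Fin d → ℤ), S.Infinite → ConnectedSet S → (S ∩ U).Nonempty → (S ∩ A).Nonempty

/-- Euclidean norm of a lattice point. -/
noncomputable def eucNorm {d : ℕ} (x : Fin d → ℤ) : ℝ :=
  Real.sqrt (∑ i : Fin d, ((x i : ℝ)) ^ 2)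

/-- The range of a path of length `k`. -/
def pathPts {d : ℕ} (γ : ℕ → Fin d → ℤ) (k : ℕ) : Set (Fin d → ℤ) :=
  {p | ∃ i ≤ k, γ i = p}

/-! Two clusters of `S`, one finite and one infinite, can be joined by no path in `S`. The
arm from `0` ends on the inner boundary of `B_N`, while the infinite cluster of `x₀` must leave
the finite ball `B_N`, and its first exit gives a second arm. A connection between the two arms
inside `S ∩ Λ` would merge the two clusters. -/

section Paths

variable {d : ℕ} {S T : Set (Fin d → ℤ)} {γ : ℕ → Fin d → ℤ} {k : ℕ} {x y z : Fin d → ℤ}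

theorem latAdj.symm (h : latAdj x y) : latAdj y x := by
  unfold latAdj at *
  simpa only [abs_sub_comm] using h

theorem IsPathIn.of_le (h : IsPathIn S γ k) {i : ℕ} (hi : i ≤ k) : IsPathIn S γ i :=
  ⟨fun j hj => h.1 j (hj.trans hi), fun j hj => h.2 j (hj.trans_le hi)⟩

theorem IsPathIn.connIn (h : IsPathIn S γ k) {i : ℕ} (hi : i ≤ k) : ConnIn S (γ 0) (γ i) :=
  ⟨γ, i, h.of_le hi, rfl, rfl⟩

theorem ConnIn.mono (hST : S ⊆ T) (h : ConnIn S x y) : ConnIn T x y := by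
  obtain ⟨γ, k, ⟨hmem, hadj⟩, h0, hk⟩ := h
  exact ⟨γ, k, ⟨fun i hi => hST (hmem i hi), hadj⟩, h0, hk⟩

theorem ConnIn.symm (h : ConnIn S x y) : ConnIn S y x := by
  obtain ⟨γ, k, ⟨hmem, hadj⟩, rfl, rfl⟩ := h
  refine ⟨fun n => γ (k - n), k, ⟨fun i _ => hmem _ (Nat.sub_le _ _), fun i hi => ?_⟩,
    by simp, by simp⟩
  have hstep := (hadj (k - (i + 1)) (by omega)).symm
  rwa [show k - (i + 1) + 1 = k - i by omega] at hstep

theorem ConnIn.trans (hxy : ConnIn S x y) (hyz : ConnIn S y z) : ConnIn S x z := by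
  obtain ⟨γ₁, k₁, ⟨hm₁, ha₁⟩, rfl, rfl⟩ := hxy
  obtain ⟨γ₂, k₂, ⟨hm₂, ha₂⟩, h₂0, rfl⟩ := hyz
  set γ : ℕ → Fin d → ℤ := fun n => if n ≤ k₁ then γ₁ n else γ₂ (n - k₁)
  have hfirst : ∀ n ≤ k₁, γ n = γ₁ n := fun n hn => if_pos hn
  have hsecond : ∀ n, k₁ ≤ n → γ n = γ₂ (n - k₁) := by
    intro n hn
    rcases hn.eq_or_lt with rfl | hlt
    · simp [γ, h₂0]
    · exact if_neg hlt.not_ge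
  refine ⟨γ, k₁ + k₂, ⟨fun i hi => ?_, fun i hi => ?_⟩, hfirst 0 k₁.zero_le, ?_⟩
  · rcases le_total i k₁ with h | h
    · exact hfirst i h ▸ hm₁ i h
    · exact hsecond i h ▸ hm₂ (i - k₁) (by omega)
  · rcases lt_or_ge i k₁ with h | h
    · rw [hfirst i h.le, hfirst (i + 1) h]
      exact ha₁ i h
    · rw [hsecond i h, hsecond (i + 1) (by omega), show i + 1 - k₁ = i - k₁ + 1 by omega]
      exact ha₂ (i - k₁) (by omega)
  · rw [hsecond _ (Nat.le_add_right _ _), Nat.add_sub_cancel_left]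

theorem connComp_subset_of_connIn (h : ConnIn S x y) : connComp S y ⊆ connComp S x :=
  fun _ hz => h.trans hz

theorem not_connIn_of_finite_of_infinite (hx : (connComp S x).Finite)
    (hy : (connComp S y).Infinite) : ¬ ConnIn S x y :=
  fun h => hy (hx.subset (connComp_subset_of_connIn h))

end Paths

theorem Nat.exists_lt_and_not_succ {P : ℕ → Prop} {k : ℕ} (h0 : P 0) (hk : ¬ P k) :
    ∃ i < k, P i ∧ ¬ P (i + 1) := by
  induction k with
  | zero => exact absurd h0 hk
  | succ n ih =>
    by_cases hn : P n
    · exact ⟨n, n.lt_succ_self, hn, hk⟩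
    · obtain ⟨i, hi, h⟩ := ih hn
      exact ⟨i, hi.trans n.lt_succ_self, h⟩

theorem exists_path_to_innerBd_of_infinite {d : ℕ} {S B : Set (Fin d → ℤ)} (hB : B.Finite)
    {x : Fin d → ℤ} (hxB : x ∈ B) (hinf : (connComp S x).Infinite) :
    ∃ (γ : ℕ → Fin d → ℤ) (k : ℕ), IsPathIn S γ k ∧ γ 0 = x ∧ γ k ∈ innerBd B := by
  obtain ⟨y, ⟨γ, k, hγ, hγ0, hγk⟩, hyB⟩ := (hinf.sdiff hB).nonempty
  obtain ⟨i, hik, hiB, hi1B⟩ :=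
    Nat.exists_lt_and_not_succ (P := fun n => γ n ∈ B) (hγ0 ▸ hxB) (hγk ▸ hyB)
  exact ⟨γ, i, hγ.of_le hik.le, hγ0, hiB, γ (i + 1), hi1B, hγ.2 i hik⟩

theorem eucNorm_nonneg {d : ℕ} (x : Fin d → ℤ) : 0 ≤ eucNorm x :=
  Real.sqrt_nonneg _

theorem eucNorm_zero {d : ℕ} : eucNorm (0 : Fin d → ℤ) = 0 := by
  simp [eucNorm]

theorem abs_le_eucNorm {d : ℕ} (x : Fin d → ℤ) (i : Fin d) : |(x i : ℝ)| ≤ eucNorm x := by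
  rw [← Real.sqrt_sq_eq_abs]
  exact Real.sqrt_le_sqrt
    (Finset.single_le_sum (f := fun j => ((x j : ℝ)) ^ 2) (fun j _ => sq_nonneg _)
      (Finset.mem_univ i))

theorem finite_eucBall {d : ℕ} (N : ℝ) : {x : Fin d → ℤ | eucNorm x ≤ N}.Finite := by
  refine (Set.Finite.pi fun _ => Set.finite_Icc (-⌈N⌉) ⌈N⌉).subset fun x hx i _ => ?_
  have hxi : |(x i : ℝ)| ≤ (⌈N⌉ : ℤ) := (abs_le_eucNorm x i).trans (hx.trans (Int.le_ceil N))
  exact abs_le.mp (mod_cast hxi)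

theorem two_arms_of_finite_cluster_general {d : ℕ} (S : Set (Fin d → ℤ))
    (σ N : ℝ) (hσ1 : σ < 1) (hN : 1 ≤ N)
    (h1 : ∃ b ∈ innerBd {x : Fin d → ℤ | eucNorm x ≤ N}, ConnIn S 0 b)
    (h2 : (connComp S 0).Finite)
    (h3 : ∃ x₀ : Fin d → ℤ, eucNorm x₀ ≤ σ * N ∧ x₀ ∈ S ∧ (connComp S x₀).Infinite) :
    ∃ (γ₁ : ℕ → Fin d → ℤ) (k₁ : ℕ) (γ₂ : ℕ → Fin d → ℤ) (k₂ : ℕ),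
      -- both are crossings of the annulus contained in `S`:
      IsPathIn S γ₁ k₁ ∧ IsPathIn S γ₂ k₂ ∧
      (∃ i ≤ k₁, eucNorm (γ₁ i) ≤ σ * N) ∧
      (∃ i ≤ k₁, γ₁ i ∈ innerBd {x : Fin d → ℤ | eucNorm x ≤ N}) ∧
      (∃ i ≤ k₂, eucNorm (γ₂ i) ≤ σ * N) ∧
      (∃ i ≤ k₂, γ₂ i ∈ innerBd {x : Fin d → ℤ | eucNorm x ≤ N}) ∧
      -- and they are not connected to each other inside `S ∩ Λ`:
      ∀ p ∈ pathPts γ₁ k₁ ∩ {x | σ * N < eucNorm x ∧ eucNorm x ≤ N},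
        ∀ q ∈ pathPts γ₂ k₂ ∩ {x | σ * N < eucNorm x ∧ eucNorm x ≤ N},
          ¬ ConnIn (S ∩ {x | σ * N < eucNorm x ∧ eucNorm x ≤ N}) p q := by
  obtain ⟨b, hb, γ₁, k₁, hγ₁, hγ₁0, hγ₁k⟩ := h1
  obtain ⟨x₀, hx₀σN, -, hinf⟩ := h3
  have hx₀N : eucNorm x₀ ≤ N := hx₀σN.trans (mul_le_of_le_one_left (by linarith) hσ1.le)
  obtain ⟨γ₂, k₂, hγ₂, hγ₂0, hγ₂k⟩ := exists_path_to_innerBd_of_infinite (finite_eucBall N)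
    (show x₀ ∈ {x | eucNorm x ≤ N} from hx₀N) hinf
  refine ⟨γ₁, k₁, γ₂, k₂, hγ₁, hγ₂, ⟨0, k₁.zero_le, ?_⟩, ⟨k₁, le_rfl, hγ₁k ▸ hb⟩,
    ⟨0, k₂.zero_le, hγ₂0 ▸ hx₀σN⟩, ⟨k₂, le_rfl, hγ₂k⟩, ?_⟩
  · rw [hγ₁0, eucNorm_zero]
    exact (eucNorm_nonneg x₀).trans hx₀σN
  rintro _ ⟨⟨i, hi, rfl⟩, -⟩ _ ⟨⟨j, hj, rfl⟩, -⟩ hpq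
  refine not_connIn_of_finite_of_infinite h2 hinf ?_
  have h0p := hγ₁0 ▸ hγ₁.connIn hi
  have hx₀q := hγ₂0 ▸ hγ₂.connIn hj
  exact (h0p.trans (hpq.mono Set.inter_subset_left)).trans hx₀q.symm

/-- Two-arms inclusion: if `0` is connected in `S` to the inner boundary of the Euclidean
ball `B_N^2`, the cluster of `0` in `S` is finite, and some point of `B_{σN}^2` lies in an
infinite cluster of `S`, then there exist two crossings of the annulus
`Λ = B_N^2 \ B_{σN}^2` contained in `S` that are not connected inside `S ∩ Λ`. -/
theorem two_arms_of_finite_cluster {d : ℕ} (hd : 1 ≤ d) (S : Set (Fin d → ℤ))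
    (σ N : ℝ) (hσ0 : 0 < σ) (hσ1 : σ < 1) (hN : 1 ≤ N)
    (h1 : ∃ b ∈ innerBd {x : Fin d → ℤ | eucNorm x ≤ N}, ConnIn S 0 b)
    (h2 : (connComp S 0).Finite)
    (h3 : ∃ x₀ : Fin d → ℤ, eucNorm x₀ ≤ σ * N ∧ x₀ ∈ S ∧ (connComp S x₀).Infinite) :
    ∃ (γ₁ : ℕ → Fin d → ℤ) (k₁ : ℕ) (γ₂ : ℕ → Fin d → ℤ) (k₂ : ℕ),
      -- both are crossings of the annulus contained in `S`:
      IsPathIn S γ₁ k₁ ∧ IsPathIn S γ₂ k₂ ∧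
      (∃ i ≤ k₁, eucNorm (γ₁ i) ≤ σ * N) ∧
      (∃ i ≤ k₁, γ₁ i ∈ innerBd {x : Fin d → ℤ | eucNorm x ≤ N}) ∧
      (∃ i ≤ k₂, eucNorm (γ₂ i) ≤ σ * N) ∧
      (∃ i ≤ k₂, γ₂ i ∈ innerBd {x : Fin d → ℤ | eucNorm x ≤ N}) ∧
      -- and they are not connected to each other inside `S ∩ Λ`:
      ∀ p ∈ pathPts γ₁ k₁ ∩ {x | σ * N < eucNorm x ∧ eucNorm x ≤ N},
        ∀ q ∈ pathPts γ₂ k₂ ∩ {x | σ * N < eucNorm x ∧ eucNorm x ≤ N},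
          ¬ ConnIn (S ∩ {x | σ * N < eucNorm x ∧ eucNorm x ≤ N}) p q :=
  two_arms_of_finite_cluster_general S σ N hσ1 hN h1 h2 h3
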